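/- arXiv:2206.03047 — 3 statements merged into one kernel-verified Lean document; each statement's English description precedes it below -/
import Mathlib

section
/- For every n ≥ 1 and every 0 ≤ k < F_n, the (k+1)-st letter of μ_n is r if and only if the number of digits 1 in the Zeckendorf expansion of k (the empty expansion when k = 0) has the same parity as n; that is, for n even the letter is r iff that number of 1s is even, and for n odd the letter is r iff it is odd. -/
/-- A `k`-Fibonacci move on states of the Tower of Hanoi-Fibonacci with `n` disks.
Disks are numbered `1,…,n`; disk `k` corresponds to index `i : Fin n` with `(i : ℕ) + 1 = k`.
Pegs are `Fin 3` (`0 = A`, `1 = B`, `2 = C`). -/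
def FibMove (n k : ℕ) (s s' : Fin n → Fin 3) : Prop :=
  1 ≤ k ∧ k ≤ n ∧
  ∃ X Y Z : Fin 3, X ≠ Y ∧ Y ≠ Z ∧ X ≠ Z ∧
    (∀ i : Fin n, (i : ℕ) + 1 = k → s i = X) ∧
    (∀ i : Fin n, (i : ℕ) + 1 < k → s i ≠ X) ∧
    (∀ i : Fin n, (i : ℕ) + 1 < k → s i = Y) ∧
    (∀ i : Fin n, ((i : ℕ) + 1 = k ∨ (i : ℕ) + 2 = k) → s' i = Z) ∧
    (∀ i : Fin n, (i : ℕ) + 1 ≠ k → (i : ℕ) + 2 ≠ k → s' i = s i)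

/-- `s 0, s 1, …, s m` is a solution of length `m` of the Tower of Hanoi-Fibonacci
with `n` disks: it starts with all disks on peg `A = 0`, ends with all disks on
peg `C = 2`, and each step is a Fibonacci move. -/
def IsSolution (n m : ℕ) (s : ℕ → (Fin n → Fin 3)) : Prop :=
  (s 0 = fun _ => 0) ∧ (s m = fun _ => 2) ∧ ∀ i < m, ∃ k, FibMove n k (s i) (s (i + 1))

set_option synthInstance.maxSize 400 in
instance (n k : ℕ) (s s' : Fin n → Fin 3) : Decidable (FibMove n k s s') := by
  unfold FibMove; infer_instance

/-- The word `μ_n ∈ {l, r}^{F n}` recording the directions of the successive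
`1`-Fibonacci moves (moves of disk `1` alone) in a solution `s` of length
`F (n+2) - 1` of the Tower of Hanoi-Fibonacci with `n` disks.  The letter `r`
(coded by `true`) means that disk `1` moves from `A` to `B`, from `B` to `C`
or from `C` to `A` (i.e. its peg increases by `1` modulo `3`); the letter `l`
is coded by `false`. -/
def muWord (n : ℕ) (s : ℕ → (Fin n → Fin 3)) : List Bool :=
  ((List.range (Nat.fib (n + 2) - 1)).filter
      (fun i => decide (FibMove n 1 (s i) (s (i + 1))))).map
    (fun i => if h : 0 < n then decide (s (i + 1) ⟨0, h⟩ = s i ⟨0, h⟩ + 1) else true)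

/-!
An optimal transfer of an `n`-tower by `d` pegs (mod 3) consists of an optimal transfer of the
`(n - 1)`-tower by `-d`, a single move of the two largest disks, and an optimal transfer of the
`(n - 2)`-tower by `-d`. Hence it has length `F (n + 2) - 1` and the word of directions of disk
`1` satisfies `μ_n(d) = μ_{n-1}(-d) μ_{n-2}(-d)`. The lower bounds behind this decomposition, for
every configuration that can occur after a first move of a large disk, are proved together by
strong induction on the length of the path. In the recursion, position `k` of `μ_n(d)` lies in
the second factor exactly when the top Zeckendorf digit of `k` is `1`, so the direction seen at
position `k` is `(-1) ^ (n + 1 + #ones) • d`.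
-/

namespace HanoiFibonacci

open Nat Finset

def OnPeg (t : ℕ → Fin 3) (i j : ℕ) (p : Fin 3) : Prop :=
  ∀ l, i ≤ l → l < j → t l = p

theorem OnPeg.mono {t : ℕ → Fin 3} {i j i' j' : ℕ} {p : Fin 3} (h : OnPeg t i j p)
    (hi : i ≤ i') (hj : j' ≤ j) : OnPeg t i' j' p :=
  fun l h₁ h₂ => h l (by omega) (by omega)

theorem OnPeg.append {t : ℕ → Fin 3} {i j k : ℕ} {p : Fin 3} (h₁ : OnPeg t i j p)
    (h₂ : OnPeg t j k p) : OnPeg t i k p := fun l h h' =>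
  (Nat.lt_or_ge l j).elim (fun hl => h₁ l h hl) fun hl => h₂ l hl h'

theorem onPeg_of_le {t : ℕ → Fin 3} {i j : ℕ} (p : Fin 3) (h : j ≤ i) : OnPeg t i j p :=
  fun _ h₁ h₂ => absurd h₂ (by omega)

/-- Disks are indexed from `0` here, so `Move a` is the `(a + 1)`-Fibonacci move. -/
def Move (a : ℕ) (t t' : ℕ → Fin 3) : Prop :=
  ∃ Y Z : Fin 3, t a ≠ Y ∧ t a ≠ Z ∧ Y ≠ Z ∧ OnPeg t 0 a Y ∧ OnPeg t' (a - 1) (a + 1) Z ∧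
    ∀ j, j + 1 < a ∨ a < j → t' j = t j

namespace Move

variable {a : ℕ} {t t' : ℕ → Fin 3}

theorem apply_ne_of_lt (h : Move a t t') {j : ℕ} (hj : j < a) : t j ≠ t a := by
  obtain ⟨Y, Z, hY, -, -, htY, -⟩ := h
  rw [htY j (Nat.zero_le j) hj]
  exact hY.symm

theorem not_onPeg {i j : ℕ} {p : Fin 3} (h : Move a t t') (hi : i < a) (hj : a < j) :
    ¬ OnPeg t i j p := fun hp =>
  h.apply_ne_of_lt hi ((hp i le_rfl (by omega)).trans (hp a hi.le hj).symm)

theorem apply_eq (h : Move a t t') {j : ℕ} (hj : j + 1 < a ∨ a < j) : t' j = t j := by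
  obtain ⟨Y, Z, -, -, -, -, -, hframe⟩ := h
  exact hframe j hj

theorem onPeg {i j : ℕ} {p : Fin 3} (h : Move a t t') (hij : j < a ∨ a < i)
    (hp : OnPeg t i j p) : OnPeg t' i j p :=
  fun l h₁ h₂ => (h.apply_eq (by omega)).trans (hp l h₁ h₂)

theorem apply_self_ne (h : Move a t t') : t' a ≠ t a := by
  obtain ⟨Y, Z, -, hZ, -, -, htZ, -⟩ := h
  rw [htZ a (Nat.sub_le a 1) (Nat.lt_succ_self a)]
  exact hZ.symm

theorem unique {b : ℕ} (ha : Move a t t') (hb : Move b t t') : a = b := by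
  by_contra hab
  rcases Nat.lt_or_gt_of_ne hab with h | h
  · exact hb.apply_self_ne (ha.apply_eq (Or.inr h))
  · exact ha.apply_self_ne (hb.apply_eq (Or.inr h))

end Move

def IsPath (K : ℕ) (s : ℕ → ℕ → Fin 3) (x m : ℕ) : Prop :=
  ∀ j < m, ∃ a < K, Move a (s (x + j)) (s (x + j + 1))

namespace IsPath

variable {K c x m : ℕ} {s : ℕ → ℕ → Fin 3}

theorem apply_eq (h : IsPath c s x m) {j : ℕ} (hj : c ≤ j) : s (x + m) j = s x j := by
  induction m with
  | zero => rfl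
  | succ m ih =>
    obtain ⟨a, ha, hmove⟩ := h m (Nat.lt_succ_self m)
    rw [← Nat.add_assoc, hmove.apply_eq (Or.inr (by omega))]
    exact ih fun i hi => h i (by omega)

theorem onPeg {i j : ℕ} {p : Fin 3} (h : IsPath c s x m) (hi : c ≤ i)
    (hp : OnPeg (s x) i j p) : OnPeg (s (x + m)) i j p :=
  fun l h₁ h₂ => (h.apply_eq (by omega)).trans (hp l h₁ h₂)

open Classical in
theorem exists_split (h : IsPath K s x m) (hc : ¬ IsPath c s x m) :
    ∃ m₁ m₂ a, m = m₁ + 1 + m₂ ∧ c ≤ a ∧ a < K ∧ IsPath c s x m₁ ∧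
      Move a (s (x + m₁)) (s (x + m₁ + 1)) ∧ IsPath K s (x + m₁ + 1) m₂ := by
  have hex : ∃ j, j < m ∧ ∃ a, c ≤ a ∧ a < K ∧ Move a (s (x + j)) (s (x + j + 1)) := by
    by_contra! hno
    refine hc fun j hj => ?_
    obtain ⟨a, ha, hmove⟩ := h j hj
    exact ⟨a, Nat.lt_of_not_le fun hca => hno j hj a hca ha hmove, hmove⟩
  obtain ⟨hm, a, hca, haK, hmove⟩ := Nat.find_spec hex
  refine ⟨Nat.find hex, m - Nat.find hex - 1, a, by omega, hca, haK, fun j hj => ?_, hmove,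
    fun j hj => ?_⟩
  · obtain ⟨a', ha', hmove'⟩ := h j (by omega)
    exact ⟨a', Nat.lt_of_not_le fun hca' =>
      Nat.find_min hex hj ⟨by omega, a', hca', ha', hmove'⟩, hmove'⟩
  · rw [Nat.add_assoc x, Nat.add_assoc x]
    exact h _ (by omega)

theorem exists_split_of_apply_ne (h : IsPath K s x m) {j : ℕ} (hj : c ≤ j)
    (hne : s (x + m) j ≠ s x j) :
    ∃ m₁ m₂ a, m = m₁ + 1 + m₂ ∧ c ≤ a ∧ a < K ∧ IsPath c s x m₁ ∧
      Move a (s (x + m₁)) (s (x + m₁ + 1)) ∧ IsPath K s (x + m₁ + 1) m₂ :=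
  h.exists_split fun hc => hne (hc.apply_eq hj)

end IsPath

/-- The directions of the moves of disk `0` when a tower of `n` disks travels by `d` pegs
(mod 3): the letter is `true` for a move by `+1`. -/
def towerWord : ℕ → Fin 3 → List Bool
  | 0, _ => []
  | 1, d => [decide (d = 1)]
  | n + 2, d => towerWord (n + 1) (-d) ++ towerWord n (-d)

theorem length_towerWord : ∀ (n : ℕ) (d : Fin 3), (towerWord n d).length = fib n
  | 0, _ => rfl
  | 1, _ => rfl
  | n + 2, d => by
    rw [towerWord, List.length_append, length_towerWord (n + 1), length_towerWord n, fib_add_two,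
      Nat.add_comm]

theorem towerWord_add_two_of_ne {p q Y : Fin 3} (hpq : p ≠ q) (hYp : Y ≠ p) (hYq : Y ≠ q)
    (n : ℕ) : towerWord (n + 2) (q - p) = towerWord (n + 1) (Y - p) ++ towerWord n (q - Y) := by
  have : Y - p = -(q - p) ∧ q - Y = -(q - p) := by revert p q Y; decide
  rw [towerWord, this.1, this.2]

open Classical in
noncomputable def moveWord (s : ℕ → ℕ → Fin 3) (x m : ℕ) : List Bool :=
  ((List.range' x m).filter fun i => decide (Move 0 (s i) (s (i + 1)))).map
    fun i => decide (s (i + 1) 0 = s i 0 + 1)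

theorem moveWord_add (s : ℕ → ℕ → Fin 3) (x m₁ m₂ : ℕ) :
    moveWord s x (m₁ + m₂) = moveWord s x m₁ ++ moveWord s (x + m₁) m₂ := by
  rw [moveWord, ← List.range'_append, List.filter_append, List.map_append, Nat.one_mul]
  rfl

theorem moveWord_one_of_move {s : ℕ → ℕ → Fin 3} {x : ℕ} (h : Move 0 (s x) (s (x + 1))) :
    moveWord s x 1 = [decide (s (x + 1) 0 = s x 0 + 1)] := by
  simp [moveWord, h]

theorem moveWord_one_of_not_move {s : ℕ → ℕ → Fin 3} {x : ℕ} (h : ¬ Move 0 (s x) (s (x + 1))) :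
    moveWord s x 1 = [] := by
  simp [moveWord, h]

theorem moveWord_split {s : ℕ → ℕ → Fin 3} {x m m₁ m₂ a : ℕ} (hm : m = m₁ + 1 + m₂) (ha : 0 < a)
    (h : Move a (s (x + m₁)) (s (x + m₁ + 1))) :
    moveWord s x m = moveWord s x m₁ ++ moveWord s (x + m₁ + 1) m₂ := by
  have hnot : ¬ Move 0 (s (x + m₁)) (s (x + m₁ + 1)) := fun h0 => ha.ne (h0.unique h)
  rw [hm, moveWord_add, moveWord_add, moveWord_one_of_not_move hnot, List.append_nil]
  rfl

def TowerBound (m : ℕ) : Prop :=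
  ∀ (s : ℕ → ℕ → Fin 3) (x n : ℕ) (p q : Fin 3), p ≠ q → IsPath n s x m →
    OnPeg (s x) 0 n p → OnPeg (s (x + m)) 0 n q →
    fib (n + 2) ≤ m + 1 ∧ (m + 1 = fib (n + 2) → moveWord s x m = towerWord n (q - p))

/-- The situation right after disk `c + 1` has been moved onto `Z`, carrying disk `c`. -/
def PairBound (m : ℕ) : Prop :=
  ∀ (s : ℕ → ℕ → Fin 3) (x c K : ℕ) (Y Z q : Fin 3), c + 2 ≤ K → Y ≠ Z → IsPath K s x m →
    OnPeg (s x) 0 c Y → OnPeg (s x) c (c + 2) Z → OnPeg (s x) (c + 2) K q →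
    OnPeg (s (x + m)) 0 K q →
    fib (c + 2) ≤ m + 1 ∧ (¬ IsPath c s x m → fib (c + 2) ≤ m) ∧ (Z ≠ q → fib (c + 3) ≤ m)

/-- The situation right after disk `b + 1` has left the peg `W` of disk `b + 2`. -/
def StaircaseBound (m : ℕ) : Prop :=
  ∀ (s : ℕ → ℕ → Fin 3) (x b K : ℕ) (Y Z W q : Fin 3), b + 3 ≤ K → Y ≠ Z → Z ≠ W → W ≠ q →
    IsPath K s x m → OnPeg (s x) 0 b Y → OnPeg (s x) b (b + 2) Z →
    OnPeg (s x) (b + 2) (b + 3) W →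
    OnPeg (s x) (b + 3) K q → OnPeg (s (x + m)) 0 K q → fib (b + 4) ≤ m + 1

theorem towerBound_one {s : ℕ → ℕ → Fin 3} {x m : ℕ} {p q : Fin 3} (hpq : p ≠ q)
    (hpath : IsPath 1 s x m) (hp : OnPeg (s x) 0 1 p) (hq : OnPeg (s (x + m)) 0 1 q) :
    fib 3 ≤ m + 1 ∧ (m + 1 = fib 3 → moveWord s x m = towerWord 1 (q - p)) := by
  have hm : m ≠ 0 := by
    rintro rfl
    exact hpq ((hp 0 le_rfl one_pos).symm.trans (hq 0 le_rfl one_pos))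
  refine ⟨by rw [show fib 3 = 2 from rfl]; omega, fun hm₁ => ?_⟩
  obtain rfl : m = 1 := by rw [show fib 3 = 2 from rfl] at hm₁; omega
  obtain ⟨a, ha, hmove : Move a (s x) (s (x + 1))⟩ := hpath 0 Nat.one_pos
  obtain rfl : a = 0 := by omega
  rw [moveWord_one_of_move hmove, hp 0 le_rfl one_pos, hq 0 le_rfl one_pos, towerWord]
  have key : ∀ p q : Fin 3, decide (q = p + 1) = decide (q - p = 1) := by decide
  rw [key]

theorem towerBound_add_two {m : ℕ} (hT : ∀ m' < m, TowerBound m')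
    (hP : ∀ m' < m, PairBound m') {s : ℕ → ℕ → Fin 3} {x N : ℕ} {p q : Fin 3} (hpq : p ≠ q)
    (hpath : IsPath (N + 2) s x m) (hp : OnPeg (s x) 0 (N + 2) p)
    (hq : OnPeg (s (x + m)) 0 (N + 2) q) :
    fib (N + 4) ≤ m + 1 ∧ (m + 1 = fib (N + 4) → moveWord s x m = towerWord (N + 2) (q - p)) := by
  obtain ⟨m₁, m₂, a, rfl, hNa, haN, hpath₁, hmove, hpath₂⟩ :=
    hpath.exists_split_of_apply_ne (c := N + 1) (j := N + 1) le_rfl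
      (by rw [hq _ (by omega) (by omega), hp _ (by omega) (by omega)]; exact hpq.symm)
  obtain rfl : a = N + 1 := by omega
  set r := x + m₁
  have hX : s r (N + 1) = p := (hpath₁.apply_eq le_rfl).trans (hp _ (by omega) (by omega))
  obtain ⟨Y, Z, hpY, -, hYZ, hY, hZ, -⟩ := id hmove
  rw [hX] at hpY
  obtain ⟨hbound₁, hword₁⟩ :=
    hT m₁ (by omega) s x (N + 1) p Y hpY hpath₁ (hp.mono le_rfl (by omega)) hY
  rw [show N + 1 + 2 = N + 3 from rfl] at hbound₁ hword₁
  have hY' : OnPeg (s (r + 1)) 0 N Y := hmove.onPeg (Or.inl (by omega)) (hY.mono le_rfl (by omega))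
  have hend : OnPeg (s (r + 1 + m₂)) 0 (N + 2) q := by
    rwa [show r + 1 + m₂ = x + (m₁ + 1 + m₂) by omega]
  obtain ⟨hbound₂, hsmall₂, hZq⟩ := hP m₂ (by omega) s (r + 1) N (N + 2) Y Z q le_rfl hYZ hpath₂
    hY' (by simpa using hZ) (onPeg_of_le q le_rfl) hend
  have hfib : fib (N + 4) = fib (N + 2) + fib (N + 3) := fib_add_two
  have hmono : fib (N + 2) ≤ fib (N + 3) := fib_mono (by omega)
  refine ⟨by omega, fun hm => ?_⟩
  have hZq : Z = q := by by_contra h; have := hZq h; omega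
  have hpath₂' : IsPath N s (r + 1) m₂ := by by_contra h; have := hsmall₂ h; omega
  have hYq : Y ≠ q := hZq ▸ hYZ
  have hword₂ := (hT m₂ (by omega) s (r + 1) N Y q hYq hpath₂' hY' (hend.mono le_rfl (by omega))).2
    (by omega)
  rw [moveWord_split rfl (Nat.succ_pos N) hmove, hword₁ (by omega), hword₂,
    towerWord_add_two_of_ne hpq hpY.symm hYq]

theorem towerBound_of_lt {m : ℕ} (hT : ∀ m' < m, TowerBound m') (hP : ∀ m' < m, PairBound m') :
    TowerBound m := by
  rintro s x (_ | _ | N) p q hpq hpath hp hq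
  · refine ⟨Nat.le_add_left 1 m, fun hm => ?_⟩
    obtain rfl : m = 0 := by rw [show fib 2 = 1 from rfl] at hm; omega
    rfl
  · exact towerBound_one hpq hpath hp hq
  · exact towerBound_add_two hT hP hpq hpath hp hq

theorem pairBound_ne_of_move_self {m₂ b K r : ℕ} (hS : StaircaseBound m₂)
    {s : ℕ → ℕ → Fin 3} {Z q : Fin 3} (hZq : Z ≠ q) (hK : b + 3 ≤ K)
    (hmove : Move (b + 1) (s r) (s (r + 1))) (hpath : IsPath K s (r + 1) m₂)
    (hZ : OnPeg (s r) (b + 1) (b + 3) Z) (hq : OnPeg (s r) (b + 3) K q)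
    (hend : OnPeg (s (r + 1 + m₂)) 0 K q) : fib (b + 4) ≤ m₂ + 1 := by
  obtain ⟨Y', Z', -, hXZ', hYZ', hY', hZ', -⟩ := id hmove
  rw [hZ (b + 1) le_rfl (by omega)] at hXZ'
  exact hS s (r + 1) b K Y' Z' Z q hK hYZ' hXZ'.symm hZq hpath
    (hmove.onPeg (Or.inl (by omega)) (hY'.mono le_rfl (by omega))) (by simpa using hZ')
    (hmove.onPeg (Or.inr (by omega)) (hZ.mono (by omega) le_rfl))
    (hmove.onPeg (Or.inr (by omega)) hq) hend

theorem pairBound_ne_of_move_add_two {m₁ m₂ c K : ℕ} (hT : TowerBound m₁) (hP : PairBound m₂)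
    {s : ℕ → ℕ → Fin 3} {x : ℕ} {Y Z q : Fin 3} (hYZ : Y ≠ Z) (hK : c + 3 ≤ K)
    (hpath₁ : IsPath c s x m₁) (hmove : Move (c + 2) (s (x + m₁)) (s (x + m₁ + 1)))
    (hpath₂ : IsPath K s (x + m₁ + 1) m₂) (hY : OnPeg (s x) 0 c Y)
    (hZ : OnPeg (s x) c (c + 2) Z) (hq : OnPeg (s x) (c + 2) K q)
    (hend : OnPeg (s (x + m₁ + 1 + m₂)) 0 K q) : fib (c + 3) ≤ m₁ + 1 + m₂ := by
  obtain ⟨Y', Z', -, hXZ', hYZ', hY', hZ', -⟩ := id hmove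
  rw [(hpath₁.apply_eq (by omega)).trans (hq _ le_rfl (by omega))] at hXZ'
  obtain rfl : Y' = Z :=
    (hY' c (Nat.zero_le c) (by omega)).symm.trans
      ((hpath₁.apply_eq le_rfl).trans (hZ c le_rfl (by omega)))
  have h₁ := (hT s x c Y Y' hYZ hpath₁ hY (hY'.mono le_rfl (by omega))).1
  have h₂ := (hP s (x + m₁ + 1) (c + 1) K Y' Z' q hK hYZ' hpath₂
    (hmove.onPeg (Or.inl (by omega)) (hY'.mono le_rfl (by omega))) (by simpa using hZ')
    (hmove.onPeg (Or.inr (by omega)) ((hpath₁.onPeg (by omega) hq).mono (by omega) le_rfl))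
    hend).2.2 hXZ'.symm
  have := fib_mono (show c + 3 ≤ c + 1 + 3 by omega)
  omega

theorem pairBound_ne_of_lt {m : ℕ} (hT : ∀ m' < m, TowerBound m') (hP : ∀ m' < m, PairBound m')
    (hS : ∀ m' < m, StaircaseBound m') {s : ℕ → ℕ → Fin 3} {x c K : ℕ} {Y Z q : Fin 3}
    (hK : c + 2 ≤ K) (hYZ : Y ≠ Z) (hZq : Z ≠ q) (hpath : IsPath K s x m)
    (hY : OnPeg (s x) 0 c Y) (hZ : OnPeg (s x) c (c + 2) Z) (hq : OnPeg (s x) (c + 2) K q)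
    (hend : OnPeg (s (x + m)) 0 K q) : fib (c + 3) ≤ m := by
  obtain ⟨m₁, m₂, a, rfl, hca, haK, hpath₁, hmove, hpath₂⟩ :=
    hpath.exists_split_of_apply_ne (c := c) (j := c + 1) (by omega)
      (by rw [hend _ (by omega) (by omega), hZ _ (by omega) (by omega)]; exact hZq.symm)
  have hZr := hpath₁.onPeg le_rfl hZ
  have hqr := hpath₁.onPeg (by omega) hq
  have hend' : OnPeg (s (x + m₁ + 1 + m₂)) 0 K q := by rwa [Nat.add_assoc x, Nat.add_assoc x]
  rcases (by omega : a = c ∨ a = c + 1 ∨ a = c + 2 ∨ c + 3 ≤ a) with rfl | rfl | rfl | ha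
  · cases a with
    | zero =>
      have hm₂ : m₂ ≠ 0 := by
        rintro rfl
        have h₁ : s (x + m₁ + 1) 1 = Z :=
          (hmove.apply_eq (Or.inr one_pos)).trans (hZr 1 (by omega) (by omega))
        exact hZq (h₁.symm.trans (hend' 1 (by omega) (by omega)))
      rw [show fib 3 = 2 from rfl]
      omega
    | succ b =>
      have := pairBound_ne_of_move_self (hS m₂ (by omega)) hZq (by omega) hmove hpath₂
        hZr hqr hend'
      rw [show b + 1 + 3 = b + 4 from rfl]
      omega
  · exact absurd hZr (hmove.not_onPeg (Nat.lt_succ_self c) (by omega))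
  · exact pairBound_ne_of_move_add_two (hT m₁ (by omega)) (hP m₂ (by omega)) hYZ (by omega)
      hpath₁ hmove hpath₂ hY hZ hq hend'
  · exact (hmove.not_onPeg (i := a - 1) (j := a + 1) (by omega) (by omega)
      (hqr.mono (by omega) (by omega))).elim

theorem fib_le_of_not_isPath {m : ℕ} (hP : ∀ m' < m, PairBound m') {s : ℕ → ℕ → Fin 3}
    {x c K : ℕ} {q : Fin 3} (hpath : IsPath K s x m) (hc : ¬ IsPath c s x m)
    (hq : OnPeg (s x) c K q) (hend : OnPeg (s (x + m)) 0 K q) : fib (c + 2) ≤ m := by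
  obtain ⟨m₁, m₂, a, rfl, hca, haK, hpath₁, hmove, hpath₂⟩ := hpath.exists_split hc
  have hqr := hpath₁.onPeg le_rfl hq
  obtain rfl : a = c := by
    by_contra hne
    exact hmove.not_onPeg (i := c) (j := a + 1) (by omega) (by omega) (hqr.mono le_rfl (by omega))
  cases a with
  | zero =>
    rw [show fib 2 = 1 from rfl]
    omega
  | succ b =>
    obtain ⟨Y', Z', -, hXZ', hYZ', hY', hZ', -⟩ := id hmove
    rw [hqr (b + 1) le_rfl haK] at hXZ'
    have hend' : OnPeg (s (x + m₁ + 1 + m₂)) 0 K q := by rwa [Nat.add_assoc x, Nat.add_assoc x]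
    have := (hP m₂ (by omega) s (x + m₁ + 1) b K Y' Z' q haK hYZ' hpath₂
      (hmove.onPeg (Or.inl (by omega)) (hY'.mono le_rfl (by omega))) (by simpa using hZ')
      (hmove.onPeg (Or.inr (by omega)) (hqr.mono (by omega) le_rfl)) hend').2.2 hXZ'.symm
    rw [show b + 1 + 2 = b + 3 from rfl]
    omega

theorem pairBound_of_lt {m : ℕ} (hT₀ : TowerBound m) (hT : ∀ m' < m, TowerBound m')
    (hP : ∀ m' < m, PairBound m') (hS : ∀ m' < m, StaircaseBound m') : PairBound m := by
  intro s x c K Y Z q hK hYZ hpath hY hZ hq hend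
  by_cases hZq : Z = q
  · subst hZq
    have hdetour := fun hc => fib_le_of_not_isPath hP hpath hc (hZ.append hq) hend
    refine ⟨?_, hdetour, fun h => absurd rfl h⟩
    by_cases hc : IsPath c s x m
    · exact (hT₀ s x c Y Z hYZ hc hY (hend.mono le_rfl (by omega))).1
    · exact Nat.le_succ_of_le (hdetour hc)
  · have := pairBound_ne_of_lt hT hP hS hK hYZ hZq hpath hY hZ hq hend
    have := fib_mono (show c + 2 ≤ c + 3 by omega)
    exact ⟨by omega, fun _ => by omega, fun _ => by omega⟩

theorem staircaseBound_of_lt {m : ℕ} (hP : ∀ m' < m, PairBound m') : StaircaseBound m := by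
  intro s x b K Y Z W q hK hYZ hZW hWq hpath hY hZ hW hq hend
  obtain ⟨m₁, m₂, a, rfl, hba, haK, hpath₁, hmove, hpath₂⟩ :=
    hpath.exists_split_of_apply_ne (c := b + 2) (j := b + 2) le_rfl
      (by rw [hend _ (by omega) (by omega), hW _ le_rfl (by omega)]; exact hWq.symm)
  have hWr := hpath₁.onPeg le_rfl hW
  have hqr := hpath₁.onPeg (by omega) hq
  have hend' : OnPeg (s (x + m₁ + 1 + m₂)) 0 K q := by rwa [Nat.add_assoc x, Nat.add_assoc x]
  obtain ⟨Y', Z', -, hXZ', hYZ', hY', hZ', -⟩ := id hmove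
  have hfib : fib (b + 4) = fib (b + 2) + fib (b + 3) := fib_add_two
  rcases (by omega : a = b + 2 ∨ a = b + 3 ∨ b + 4 ≤ a) with rfl | rfl | ha
  · have h₁ := (hP m₁ (by omega) s x b (b + 2) Y Z Y' le_rfl hYZ hpath₁ hY hZ
      (onPeg_of_le Y' le_rfl) hY').1
    have h₂ := (hP m₂ (by omega) s (x + m₁ + 1) (b + 1) K Y' Z' q (by omega) hYZ' hpath₂
      (hmove.onPeg (Or.inl (by omega)) (hY'.mono le_rfl (by omega))) (by simpa using hZ')
      (hmove.onPeg (Or.inr (by omega)) hqr) hend').1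
    rw [show b + 1 + 2 = b + 3 from rfl] at h₂
    omega
  · obtain rfl : Y' = W :=
      (hY' (b + 2) (by omega) (by omega)).symm.trans (hWr (b + 2) le_rfl (by omega))
    rw [hqr (b + 3) le_rfl haK] at hXZ'
    have h₁ := (hP m₁ (by omega) s x b (b + 2) Y Z Y' le_rfl hYZ hpath₁ hY hZ
      (onPeg_of_le Y' le_rfl) (hY'.mono le_rfl (by omega))).2.2 hZW
    have h₂ := (hP m₂ (by omega) s (x + m₁ + 1) (b + 2) K Y' Z' q (by omega) hYZ' hpath₂
      (hmove.onPeg (Or.inl (by omega)) (hY'.mono le_rfl (by omega))) (by simpa using hZ')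
      (hmove.onPeg (Or.inr (by omega)) (hqr.mono (by omega) le_rfl)) hend').2.2 hXZ'.symm
    have := fib_mono (show b + 2 ≤ b + 2 + 3 by omega)
    omega
  · exact (hmove.not_onPeg (i := a - 1) (j := a + 1) (by omega) (by omega)
      (hqr.mono (by omega) (by omega))).elim

theorem towerBound_pairBound_staircaseBound (m : ℕ) :
    TowerBound m ∧ PairBound m ∧ StaircaseBound m := by
  induction m using Nat.strong_induction_on with
  | _ m ih =>
    have hT : ∀ m' < m, TowerBound m' := fun m' h => (ih m' h).1
    have hP : ∀ m' < m, PairBound m' := fun m' h => (ih m' h).2.1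
    have hT₀ := towerBound_of_lt hT hP
    exact ⟨hT₀, pairBound_of_lt hT₀ hT hP fun m' h => (ih m' h).2.2, staircaseBound_of_lt hP⟩

/-- `u i` is the coefficient of `fib i` in a Zeckendorf expansion using positions below `n`. -/
def IsZeckendorfDigits (u : ℕ → ℕ) (n : ℕ) : Prop :=
  u 0 = 0 ∧ u 1 = 0 ∧ (∀ i < n, u i ≤ 1) ∧ ∀ i, i + 1 < n → u i = 0 ∨ u (i + 1) = 0

namespace IsZeckendorfDigits

variable {u : ℕ → ℕ} {n : ℕ}

theorem mono (h : IsZeckendorfDigits u n) {m : ℕ} (hmn : m ≤ n) : IsZeckendorfDigits u m :=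
  ⟨h.1, h.2.1, fun i hi => h.2.2.1 i (by omega), fun i hi => h.2.2.2 i (by omega)⟩

theorem pos_and_eq_zero_of_eq_one {m : ℕ} (h : IsZeckendorfDigits u (m + 2))
    (hu : u (m + 1) = 1) : 0 < m ∧ u m = 0 := by
  refine ⟨Nat.pos_of_ne_zero fun hm => ?_, (h.2.2.2 m (by omega)).resolve_right (by omega)⟩
  subst hm
  exact zero_ne_one (h.2.1.symm.trans hu)

theorem sum_lt_fib (h : IsZeckendorfDigits u n) (hn : 0 < n) :
    ∑ i ∈ range n, u i * fib i < fib n := by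
  induction n using Nat.strong_induction_on with
  | _ n ih =>
  match n, hn with
  | 1, _ => simp
  | n + 2, _ =>
    rw [sum_range_succ, fib_add_two]
    rcases Nat.le_one_iff_eq_zero_or_eq_one.mp (h.2.2.1 (n + 1) (by omega)) with hu | hu
    · have := ih (n + 1) (by omega) (h.mono (by omega)) (by omega)
      rw [hu, zero_mul, add_zero]
      omega
    · obtain ⟨hm, hu₀⟩ := h.pos_and_eq_zero_of_eq_one hu
      obtain ⟨m, rfl⟩ : ∃ m, n = m + 1 := Nat.exists_eq_succ_of_ne_zero hm.ne'
      have := ih (m + 1) (by omega) (h.mono (by omega)) (by omega)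
      rw [sum_range_succ, hu₀, hu]
      omega

theorem getD_towerWord (h : IsZeckendorfDigits u n) (hn : 0 < n) (d : Fin 3) :
    (towerWord n d).getD (∑ i ∈ range n, u i * fib i) false =
      decide ((-1) ^ (n + 1 + ∑ i ∈ range n, u i) * d = 1) := by
  induction n using Nat.strong_induction_on generalizing d with
  | _ n ih =>
  match n, hn with
  | 1, _ => simp [towerWord, h.1]
  | n + 2, _ =>
    have hflip (e : ℕ) : (-1 : Fin 3) ^ e * -d = (-1) ^ (e + 1) * d := by
      rw [pow_succ, mul_neg_one, neg_mul, mul_neg]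
    rw [towerWord, sum_range_succ, sum_range_succ (fun i => u i)]
    rcases Nat.le_one_iff_eq_zero_or_eq_one.mp (h.2.2.1 (n + 1) (by omega)) with hu | hu
    · have hlt := (h.mono (by omega)).sum_lt_fib n.succ_pos
      rw [hu, zero_mul, add_zero, add_zero, List.getD_append _ _ _ _ (by rwa [length_towerWord]),
        ih (n + 1) (by omega) (h.mono (by omega)) n.succ_pos, hflip, Nat.add_right_comm _ _ 1]
    · obtain ⟨hm, hu₀⟩ := h.pos_and_eq_zero_of_eq_one hu
      obtain ⟨m, rfl⟩ : ∃ m, n = m + 1 := Nat.exists_eq_succ_of_ne_zero hm.ne'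
      rw [sum_range_succ, sum_range_succ (fun i => u i), hu₀, hu, zero_mul, add_zero, add_zero,
        one_mul, List.getD_append_right _ _ _ _ (by rw [length_towerWord]; omega),
        length_towerWord, Nat.add_sub_cancel,
        ih (m + 1) (by omega) (h.mono (by omega)) m.succ_pos, hflip,
        show m + 1 + 2 + 1 + (∑ i ∈ range (m + 1), u i + 1) =
          m + 1 + 1 + ∑ i ∈ range (m + 1), u i + 1 + 2 by ring, pow_add _ _ 2, neg_one_sq, mul_one]

end IsZeckendorfDigits

theorem eq_zero_of_sum_mul_fib_lt {u : ℕ → ℕ} {N j : ℕ}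
    (hsum : ∑ i ∈ range N, u i * fib i < fib j) (hj : j < N) : u j = 0 := by
  by_contra h
  have := single_le_sum (f := fun i => u i * fib i) (fun i _ => Nat.zero_le _) (mem_range.mpr hj)
  have := Nat.le_mul_of_pos_left (fib j) (Nat.pos_of_ne_zero h)
  omega

theorem neg_one_pow_mul_two_eq_one_iff (k : ℕ) : (-1 : Fin 3) ^ k * 2 = 1 ↔ k % 2 = 1 := by
  rcases Nat.even_or_odd k with hk | hk
  · rw [hk.neg_one_pow, Nat.even_iff.mp hk]
    decide
  · rw [hk.neg_one_pow, Nat.odd_iff.mp hk]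
    decide

def liftState (n : ℕ) (f : Fin n → Fin 3) : ℕ → Fin 3 :=
  fun j => if h : j < n then f ⟨j, h⟩ else 0

theorem liftState_of_lt {n j : ℕ} (f : Fin n → Fin 3) (h : j < n) : liftState n f j = f ⟨j, h⟩ :=
  dif_pos h

theorem liftState_of_le {n j : ℕ} (f : Fin n → Fin 3) (h : n ≤ j) : liftState n f j = 0 :=
  dif_neg (Nat.not_lt.mpr h)

theorem move_of_fibMove {n k : ℕ} {f f' : Fin n → Fin 3} (h : FibMove n k f f') :
    Move (k - 1) (liftState n f) (liftState n f') := by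
  obtain ⟨hk, hkn, X, Y, Z, hXY, hYZ, hXZ, hX, -, hY, hZ, hframe⟩ := h
  have hX' : liftState n f (k - 1) = X := by
    rw [liftState_of_lt f (by omega)]
    exact hX _ (show k - 1 + 1 = k by omega)
  refine ⟨Y, Z, hX' ▸ hXY, hX' ▸ hXZ, hYZ, fun j _ hj => ?_, fun j _ hj => ?_, fun j hj => ?_⟩
  · rw [liftState_of_lt f (by omega)]
    exact hY _ (show j + 1 < k by omega)
  · rw [liftState_of_lt f' (by omega)]
    exact hZ _ (show j + 1 = k ∨ j + 2 = k by omega)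
  · rcases Nat.lt_or_ge j n with hjn | hjn
    · rw [liftState_of_lt f hjn, liftState_of_lt f' hjn]
      exact hframe _ (show j + 1 ≠ k by omega) (show j + 2 ≠ k by omega)
    · rw [liftState_of_le f hjn, liftState_of_le f' hjn]

theorem move_zero_iff_fibMove_one {n : ℕ} (hn : 0 < n) {f f' : Fin n → Fin 3} :
    Move 0 (liftState n f) (liftState n f') ↔ FibMove n 1 f f' := by
  refine ⟨fun ⟨Y, Z, hXY, hXZ, hYZ, _, hZ, hframe⟩ => ?_, move_of_fibMove⟩
  rw [liftState_of_lt f hn] at hXY hXZ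
  have h0 (i : Fin n) (hi : (i : ℕ) = 0) : i = ⟨0, hn⟩ := Fin.ext hi
  refine ⟨le_rfl, hn, f ⟨0, hn⟩, Y, Z, hXY, hYZ, hXZ, fun i hi => by rw [h0 i (by omega)],
    fun i hi => absurd hi (by omega), fun i hi => absurd hi (by omega), fun i hi => ?_,
    fun i hi _ => ?_⟩
  · rw [h0 i (by omega), ← liftState_of_lt f' hn]
    exact hZ 0 le_rfl Nat.one_pos
  · rw [← liftState_of_lt f' i.isLt, ← liftState_of_lt f i.isLt]
    exact hframe i (Or.inr (by omega))

theorem muWord_eq_moveWord {n : ℕ} (hn : 0 < n) (s : ℕ → Fin n → Fin 3) :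
    muWord n s = moveWord (fun i => liftState n (s i)) 0 (fib (n + 2) - 1) := by
  simp only [muWord, moveWord, ← List.range_eq_range', dif_pos hn, liftState_of_lt _ hn]
  congr 2
  funext i
  exact decide_eq_decide.mpr (move_zero_iff_fibMove_one hn).symm

theorem muWord_eq_towerWord {n : ℕ} (hn : 0 < n) {s : ℕ → Fin n → Fin 3}
    (hs : IsSolution n (fib (n + 2) - 1) s) : muWord n s = towerWord n 2 := by
  obtain ⟨hstart, hend, hmoves⟩ := hs
  have hpath : IsPath n (fun i => liftState n (s i)) 0 (fib (n + 2) - 1) := fun i hi => by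
    obtain ⟨k, hk⟩ := hmoves i hi
    rw [Nat.zero_add]
    exact ⟨k - 1, by have := hk.2.1; omega, move_of_fibMove hk⟩
  have hA : OnPeg (liftState n (s 0)) 0 n 0 := fun j _ hj => by rw [liftState_of_lt _ hj, hstart]
  have hC : OnPeg (liftState n (s (0 + (fib (n + 2) - 1)))) 0 n 2 := fun j _ hj => by
    rw [Nat.zero_add, liftState_of_lt _ hj, hend]
  have hopt := ((towerBound_pairBound_staircaseBound _).1 _ 0 n 0 2 (by decide) hpath hA hC).2
  rw [muWord_eq_moveWord hn, hopt (Nat.sub_add_cancel (fib_pos.mpr (by omega)))]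
  rfl

end HanoiFibonacci

open HanoiFibonacci Finset

/-- For `n ≥ 1` and `0 ≤ k < F n`, the `(k+1)`-st letter of `μ_n` is
`r` (i.e. `true`) if and only if the number of `1`s in the Zeckendorf expansion of `k`
(given by the digit sequence `u`, the empty expansion when `k = 0`) has the same parity
as `n`. -/
theorem hanoiFibonacci_mu_letter (n : ℕ) (hn : 1 ≤ n)
    (s : ℕ → (Fin n → Fin 3)) (hs : IsSolution n (Nat.fib (n + 2) - 1) s)
    (k : ℕ) (hk : k < Nat.fib n)
    (u : ℕ → ℕ)
    (hu01 : ∀ i, u i ≤ 1) (hu11 : ∀ i, ¬(u i = 1 ∧ u (i + 1) = 1))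
    (husupp : ∀ i, i < 2 ∨ n + 1 < i → u i = 0)
    (husum : ∑ i ∈ Finset.range (n + 2), u i * Nat.fib i = k) :
    (muWord n s).getD k false = true ↔
      (∑ i ∈ Finset.range (n + 2), u i) % 2 = n % 2 := by
  have hdigits : IsZeckendorfDigits u n :=
    ⟨husupp 0 (by omega), husupp 1 (by omega), fun i _ => hu01 i, fun i _ => by
      have := hu01 i; have := hu01 (i + 1); have := hu11 i; omega⟩
  have htop (j : ℕ) (hj : n ≤ j) (hj' : j < n + 2) : u j = 0 :=
    eq_zero_of_sum_mul_fib_lt (husum ▸ hk.trans_le (Nat.fib_mono hj)) hj'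
  simp only [sum_range_succ, htop n le_rfl (by omega), htop (n + 1) (by omega) (by omega), zero_mul,
    add_zero] at husum ⊢
  rw [muWord_eq_towerWord hn hs, ← husum, hdigits.getD_towerWord hn, decide_eq_true_iff,
    neg_one_pow_mul_two_eq_one_iff]
  omega
end

section
/- μ_0 is the empty word, μ_1 = l, and for every n ≥ 2 one has μ_n = (μ_{n−1}μ_{n−2})^*, where w^* denotes the word w with every letter l replaced by r and every letter r replaced by l; moreover, for every n ≥ 4, μ_n = μ_{n−2} μ_{n−3} μ_{n−3} μ_{n−4}. -/
/-!
A shortest transfer of `n + 2` disks has to move the largest disk, which only the `(n + 2)`-move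
does. A potential bounding the number of remaining moves from below (it drops by at most one per
move and equals `F (k + 2) - 1` on a tower of `k` disks away from the target) pins this move
down: it comes after exactly `F (n + 3) - 1` moves, which carry the `n + 1` smaller disks to the
third peg, and it puts the two largest disks on the target, where they stay while the `n`
smallest follow in `F (n + 2) - 1` moves. By induction the shortest transfer is unique, so its
two halves are the optimal solutions for `n + 1` and `n` disks composed with the reflections
`x ↦ -x` and `x ↦ 1 - x` of the pegs, which reverse the cyclic orientation and hence swap `l`
and `r`; the middle move does not move disk `1`. This gives `μ_{n+2} = (μ_{n+1} μ_n)^*`, and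
since `*` is an involution, applying it twice gives the four-term recurrence.
-/

namespace HanoiFib

open Fin (init snoc last castSucc)

/-- For `a ≠ b`, the remaining peg, since `0 + 1 + 2 = 0` in `Fin 3`. -/
def third (a b : Fin 3) : Fin 3 := -(a + b)

lemma third_ne_left {a b : Fin 3} (h : a ≠ b) : third a b ≠ a := by revert a b; decide

lemma third_ne_right {a b : Fin 3} (h : a ≠ b) : third a b ≠ b := by revert a b; decide

lemma eq_third {a b c : Fin 3} (hab : a ≠ b) (hca : c ≠ a) (hcb : c ≠ b) : c = third a b := by
  revert a b c; decide

lemma eq_or_eq_or_eq_of_ne {a b c : Fin 3} (hab : a ≠ b) (hbc : b ≠ c) (hac : a ≠ c)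
    (r : Fin 3) : r = a ∨ r = b ∨ r = c := by
  revert a b c r; decide

section Moves

variable {n k : ℕ}

lemma _root_.FibMove.apply_eq {s s' : Fin n → Fin 3} (h : FibMove n k s s') (j : Fin n)
    (h1 : (j : ℕ) + 1 ≠ k) (h2 : (j : ℕ) + 2 ≠ k) : s' j = s j := by
  obtain ⟨-, -, -, -, -, -, -, -, -, -, -, -, hu⟩ := h
  exact hu j h1 h2

lemma _root_.FibMove.comp {s s' : Fin n → Fin 3} (f : Fin 3 → Fin 3) (hf : Function.Injective f)
    (h : FibMove n k s s') : FibMove n k (f ∘ s) (f ∘ s') := by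
  obtain ⟨h1, h2, X, Y, Z, hXY, hYZ, hXZ, hX, hnX, hY, hZ, hu⟩ := h
  exact ⟨h1, h2, f X, f Y, f Z, hf.ne hXY, hf.ne hYZ, hf.ne hXZ,
    fun i hi => congrArg f (hX i hi), fun i hi => hf.ne (hnX i hi),
    fun i hi => congrArg f (hY i hi), fun i hi => congrArg f (hZ i hi),
    fun i hi hi' => congrArg f (hu i hi hi')⟩

lemma _root_.fibMove_one_iff (hn : 0 < n) {s s' : Fin n → Fin 3} :
    FibMove n 1 s s' ↔
      s' ⟨0, hn⟩ ≠ s ⟨0, hn⟩ ∧ ∀ j : Fin n, (j : ℕ) ≠ 0 → s' j = s j := by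
  have h0 : ∀ i : Fin n, (i : ℕ) + 1 = 1 → i = ⟨0, hn⟩ :=
    fun i hi => Fin.ext (by simp; omega)
  constructor
  · rintro ⟨-, -, X, Y, Z, -, -, hXZ, hX, -, -, hZ, hu⟩
    rw [hX _ rfl, hZ _ (Or.inl rfl)]
    exact ⟨hXZ.symm, fun j hj => hu j (by omega) (by omega)⟩
  · rintro ⟨hne, hu⟩
    refine ⟨le_rfl, hn, s ⟨0, hn⟩, third (s ⟨0, hn⟩) (s' ⟨0, hn⟩), s' ⟨0, hn⟩,
      (third_ne_left hne.symm).symm, third_ne_right hne.symm, hne.symm,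
      fun i hi => by rw [h0 i hi], fun i hi => by omega, fun i hi => by omega,
      fun i hi => ?_, fun i hi _ => hu i (by omega)⟩
    rcases hi with hi | hi
    · rw [h0 i hi]
    · omega

lemma _root_.fibMove_succ_iff (hk : k ≤ n) {s s' : Fin (n + 1) → Fin 3} :
    FibMove (n + 1) k s s' ↔ FibMove n k (init s) (init s') ∧ s' (last n) = s (last n) := by
  simp only [FibMove, Fin.forall_fin_succ', Fin.val_castSucc, Fin.val_last, init]
  constructor
  · rintro ⟨h1, -, X, Y, Z, hXY, hYZ, hXZ, hX, hnX, hY, hZ, hu⟩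
    exact ⟨⟨h1, hk, X, Y, Z, hXY, hYZ, hXZ, hX.1, hnX.1, hY.1, hZ.1, hu.1⟩,
      hu.2 (by omega) (by omega)⟩
  · rintro ⟨⟨h1, -, X, Y, Z, hXY, hYZ, hXZ, hX, hnX, hY, hZ, hu⟩, hlast⟩
    exact ⟨h1, by omega, X, Y, Z, hXY, hYZ, hXZ, ⟨hX, by omega⟩, ⟨hnX, by omega⟩,
      ⟨hY, by omega⟩, ⟨hZ, by omega⟩, ⟨hu, fun _ _ => hlast⟩⟩

lemma _root_.FibMove.le_iff_apply_last_eq {s s' : Fin (n + 1) → Fin 3}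
    (h : FibMove (n + 1) k s s') : k ≤ n ↔ s' (last n) = s (last n) := by
  refine ⟨fun hk => ((fibMove_succ_iff hk).1 h).2, fun hlast => ?_⟩
  by_contra hk
  obtain ⟨-, hkn, X, -, Z, -, -, hXZ, hX, -, -, hZ, -⟩ := h
  rw [hX _ (by simp; omega), hZ _ (Or.inl (by simp; omega))] at hlast
  exact hXZ hlast.symm

lemma _root_.FibMove.eq_snoc {s s' : Fin (n + 2) → Fin 3} (h : FibMove (n + 2) (n + 2) s s') :
    ∃ X Y Z : Fin 3, X ≠ Y ∧ Y ≠ Z ∧ X ≠ Z ∧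
      s = snoc (fun _ => Y) X ∧ s' = snoc (snoc (fun _ => Y) Z) Z := by
  obtain ⟨-, -, X, Y, Z, hXY, hYZ, hXZ, hX, -, hY, hZ, hu⟩ := h
  refine ⟨X, Y, Z, hXY, hYZ, hXZ, funext fun j => ?_, funext fun j => ?_⟩
  · induction j using Fin.lastCases with
    | last => simpa using hX _ (by simp)
    | cast i => simpa using hY _ (by simp; omega)
  · induction j using Fin.lastCases with
    | last => simpa using hZ _ (Or.inl (by simp))
    | cast i =>
      induction i using Fin.lastCases with
      | last => simpa using hZ _ (Or.inr (by simp))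
      | cast i =>
        simp only [Fin.snoc_castSucc]
        rw [hu _ (by simp; omega) (by simp; omega)]
        exact hY _ (by simp)

end Moves

/-- A lower bound for the number of moves needed to gather all disks on peg `r`. The first branch
is the cost of gathering the smaller disks on the third peg, moving the two largest disks together
onto `r` and bringing the `n - 1` smallest after them. -/
def potential : (n : ℕ) → (Fin n → Fin 3) → Fin 3 → ℕ
  | 0, _, _ => 0
  | n + 1, s, r =>
    if s (last n) = r then potential n (init s) r
    else min (potential n (init s) (third (s (last n)) r) + Nat.fib (n + 1))
      (potential n (init s) r + 1 + Nat.fib (n + 2))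

lemma potential_snoc (n : ℕ) (t : Fin n → Fin 3) (x r : Fin 3) :
    potential (n + 1) (snoc t x) r =
      if x = r then potential n t r
      else min (potential n t (third x r) + Nat.fib (n + 1))
        (potential n t r + 1 + Nat.fib (n + 2)) := by
  simp [potential]

lemma const_eq_snoc {α : Type*} (n : ℕ) (p : α) :
    (fun _ : Fin (n + 1) => p) = snoc (fun _ : Fin n => p) p := by
  rw [← Fin.snoc_init_self (fun _ : Fin (n + 1) => p)]
  rfl

lemma potential_const (n : ℕ) (p r : Fin 3) :
    potential n (fun _ => p) r = if p = r then 0 else Nat.fib (n + 2) - 1 := by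
  induction n generalizing r with
  | zero => simp [potential]
  | succ n ih =>
    rw [const_eq_snoc, potential_snoc, ih, ih]
    by_cases h : p = r
    · simp [h]
    · have : p ≠ third p r := (third_ne_left h).symm
      simp only [h, this, if_false]
      have : Nat.fib (n + 1 + 2) = Nat.fib (n + 1) + Nat.fib (n + 2) := Nat.fib_add_two
      have : Nat.fib (n + 2) = Nat.fib n + Nat.fib (n + 1) := Nat.fib_add_two
      have := Nat.fib_pos.2 (Nat.succ_pos n)
      omega

lemma potential_snoc_snoc_of_ne {m : ℕ} {Y Z r : Fin 3} (hZr : Z ≠ r) :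
    Nat.fib (m + 3) - 1 ≤ potential (m + 2) (snoc (snoc (fun _ => Y) Z) Z) r := by
  have htZ : third Z r ≠ Z := third_ne_left hZr
  rw [potential_snoc, if_neg hZr, potential_snoc, potential_snoc, if_neg htZ.symm, if_neg hZr]
  simp only [show m + 1 + 1 = m + 2 from rfl, show m + 1 + 2 = m + 3 from rfl]
  have : Nat.fib (m + 3) = Nat.fib (m + 1) + Nat.fib (m + 2) := Nat.fib_add_two
  have : Nat.fib (m + 2) = Nat.fib m + Nat.fib (m + 1) := Nat.fib_add_two
  have := Nat.fib_pos.2 (Nat.succ_pos m)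
  omega

lemma potential_snoc_snoc_self {m : ℕ} {Y r : Fin 3} (hYr : Y ≠ r) :
    potential (m + 2) (snoc (snoc (fun _ => Y) r) r) r = Nat.fib (m + 2) - 1 := by
  rw [potential_snoc, if_pos rfl, potential_snoc, if_pos rfl, potential_const, if_neg hYr]

lemma potential_le_succ_of_top_move {m : ℕ} {X Y Z : Fin 3} (hXY : X ≠ Y) (hYZ : Y ≠ Z)
    (hXZ : X ≠ Z) (r : Fin 3) :
    potential (m + 2) (snoc (fun _ => Y) X) r ≤
      potential (m + 2) (snoc (snoc (fun _ => Y) Z) Z) r + 1 := by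
  have tXY : third X Y = Z := (eq_third hXY hXZ.symm hYZ.symm).symm
  have tXZ : third X Z = Y := (eq_third hXZ hXY.symm hYZ).symm
  have tZX : third Z X = Y := (eq_third hXZ.symm hYZ hXY.symm).symm
  have tZY : third Z Y = X := (eq_third hYZ.symm hXZ hXY).symm
  have : Nat.fib (m + 3) = Nat.fib (m + 1) + Nat.fib (m + 2) := Nat.fib_add_two
  have : Nat.fib (m + 2) = Nat.fib m + Nat.fib (m + 1) := Nat.fib_add_two
  have := Nat.fib_pos.2 (Nat.succ_pos m)
  rcases eq_or_eq_or_eq_of_ne hXY hYZ hXZ r with rfl | rfl | rfl <;>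
    simp [potential_snoc, potential_const, tXY, tXZ, tZX, tZY, hXY, hYZ, hXZ, hXY.symm,
      hYZ.symm, hXZ.symm, show m + 1 + 1 = m + 2 from rfl, show m + 1 + 2 = m + 3 from rfl] <;>
    omega

lemma potential_le_succ_of_fibMove {n k : ℕ} {s s' : Fin n → Fin 3} (h : FibMove n k s s')
    (r : Fin 3) : potential n s r ≤ potential n s' r + 1 := by
  induction n generalizing k r with
  | zero => exact absurd h.2.1 (by have := h.1; omega)
  | succ n ih =>
    rcases Nat.lt_or_ge n k with hk | hk
    · obtain rfl : k = n + 1 := le_antisymm h.2.1 hk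
      cases n with
      | zero => simp only [potential, zero_add, Nat.fib_one, Nat.fib_two]; split_ifs <;> omega
      | succ m =>
        obtain ⟨X, Y, Z, hXY, hYZ, hXZ, rfl, rfl⟩ := h.eq_snoc
        exact potential_le_succ_of_top_move hXY hYZ hXZ r
    · obtain ⟨h', hlast⟩ := (fibMove_succ_iff hk).1 h
      have := ih h' (third (s (last n)) r)
      have := ih h' r
      simp only [potential, hlast]
      split <;> omega

def IsWalk (n m : ℕ) (s : ℕ → Fin n → Fin 3) : Prop :=
  ∀ i < m, ∃ k, FibMove n k (s i) (s (i + 1))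

structure IsTransfer (n : ℕ) (p q : Fin 3) (m : ℕ) (s : ℕ → Fin n → Fin 3) : Prop where
  start : s 0 = fun _ => p
  finish : s m = fun _ => q
  walk : IsWalk n m s

lemma _root_.IsSolution.isTransfer {n m : ℕ} {s : ℕ → Fin n → Fin 3}
    (h : IsSolution n m s) : IsTransfer n 0 2 m s :=
  ⟨h.1, h.2.1, h.2.2⟩

section Walks

variable {n m : ℕ} {s : ℕ → Fin n → Fin 3}

lemma IsWalk.mono (h : IsWalk n m s) {m' : ℕ} (hm : m' ≤ m) : IsWalk n m' s :=
  fun i hi => h i (by omega)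

lemma IsWalk.shift (h : IsWalk n m s) (j : ℕ) : IsWalk n (m - j) (fun i => s (j + i)) :=
  fun i hi => h (j + i) (by omega)

lemma IsWalk.init {s : ℕ → Fin (n + 1) → Fin 3} (h : IsWalk (n + 1) m s) {c : Fin 3}
    (hc : ∀ i ≤ m, s i (last n) = c) : IsWalk n m (fun i => init (s i)) := by
  intro i hi
  obtain ⟨k, hk⟩ := h i hi
  have hkn : k ≤ n := hk.le_iff_apply_last_eq.2 (by rw [hc i hi.le, hc (i + 1) hi])
  exact ⟨k, ((fibMove_succ_iff hkn).1 hk).1⟩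

lemma IsWalk.potential_le (h : IsWalk n m s) {r : Fin 3} (hm : s m = fun _ => r) :
    potential n (s 0) r ≤ m := by
  induction m generalizing s with
  | zero => simp [hm, potential_const]
  | succ m ih =>
    obtain ⟨k, hk⟩ := h 0 (by omega)
    have := potential_le_succ_of_fibMove hk r
    have := ih (s := fun i => s (i + 1)) (fun i hi => h (i + 1) (by omega)) hm
    omega

lemma IsTransfer.reflect {p q : Fin 3} (h : IsTransfer n p q m s) (c : Fin 3) :
    IsTransfer n (c - p) (c - q) m (fun i j => c - s i j) where
  start := by simp [h.start]
  finish := by simp [h.finish]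
  walk i hi := (h.walk i hi).imp fun _ hk => hk.comp _ sub_right_injective

end Walks

lemma exists_first_ne {α : Type*} (f : ℕ → α) {m : ℕ} (h : f m ≠ f 0) :
    ∃ t < m, (∀ i ≤ t, f i = f 0) ∧ f (t + 1) ≠ f 0 := by
  classical
  have hm : m ≠ 0 := by rintro rfl; exact h rfl
  have hex : ∃ t, f (t + 1) ≠ f 0 := ⟨m - 1, by rwa [Nat.sub_add_cancel (by omega)]⟩
  refine ⟨Nat.find hex, ?_, fun i hi => ?_, Nat.find_spec hex⟩
  · have := Nat.find_min' hex (m := m - 1) (by rwa [Nat.sub_add_cancel (by omega)])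
    omega
  · cases i with
    | zero => rfl
    | succ i => exact not_not.1 (Nat.find_min hex (by omega))

section Decomposition

variable {n : ℕ} {p q : Fin 3} {s : ℕ → Fin (n + 2) → Fin 3}

lemma IsTransfer.exists_top_move {m : ℕ} (hpq : p ≠ q) (hs : IsTransfer (n + 2) p q m s) :
    ∃ t < m, ∃ Y Z : Fin 3, p ≠ Y ∧ Y ≠ Z ∧ (∀ i ≤ t, s i (last (n + 1)) = p) ∧
      s t = snoc (fun _ => Y) p ∧ s (t + 1) = snoc (snoc (fun _ => Y) Z) Z := by
  have hchange : s m (last (n + 1)) ≠ s 0 (last (n + 1)) := by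
    rw [hs.start, hs.finish]; exact hpq.symm
  obtain ⟨t, htm, hbefore, hafter⟩ := exists_first_ne (fun i => s i (last (n + 1))) hchange
  rw [hs.start] at hbefore hafter
  obtain ⟨k, hk⟩ := hs.walk t htm
  have hkn : k = n + 2 := by
    have := hk.2.1
    have := mt hk.le_iff_apply_last_eq.1 (by rw [hbefore t le_rfl]; exact hafter)
    omega
  subst hkn
  obtain ⟨X, Y, Z, hXY, hYZ, -, hst, hst1⟩ := hk.eq_snoc
  obtain rfl : X = p := by simpa [hst] using hbefore t le_rfl
  exact ⟨t, htm, Y, Z, hXY, hYZ, hbefore, hst, hst1⟩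

lemma _root_.FibMove.fib_sub_one_le_potential {s s' : Fin (n + 3) → Fin 3}
    (h : FibMove (n + 3) (n + 2) s s') (hlast : s (last (n + 2)) = q)
    (hnext : s (castSucc (last (n + 1))) = q) :
    Nat.fib (n + 3) - 1 ≤ potential (n + 3) s' q := by
  obtain ⟨hinit, hl⟩ := (fibMove_succ_iff (by omega)).1 h
  obtain ⟨X, Y, Z, -, -, hXZ, hs, hs'⟩ := hinit.eq_snoc
  have hX : X = q := by
    have : init s (last (n + 1)) = X := by simpa using congrFun hs (last (n + 1))
    exact this.symm.trans hnext
  rw [← Fin.snoc_init_self s', hl, hlast, potential_snoc, if_pos rfl, hs']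
  exact potential_snoc_snoc_of_ne (hX ▸ hXZ.symm)

/-- Moving the larger of the two disks is impossible, and moving the smaller one costs too
much. -/
lemma IsWalk.two_largest_stay {Y : Fin 3} (hs : IsWalk (n + 2) (Nat.fib (n + 2) - 1) s)
    (h0 : s 0 = snoc (snoc (fun _ => Y) q) q) (hend : s (Nat.fib (n + 2) - 1) = fun _ => q) :
    ∀ j ≤ Nat.fib (n + 2) - 1,
      s j (last (n + 1)) = q ∧ s j (castSucc (last n)) = q := by
  intro j hj
  induction j with
  | zero => simp [h0]
  | succ j ih =>
    obtain ⟨hlast, hnext⟩ := ih (by omega)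
    obtain ⟨k, hk⟩ := hs j (by omega)
    rcases Nat.lt_or_ge n k with hkn | hkn
    · exfalso
      rcases (show k = n + 1 ∨ k = n + 2 by have := hk.2.1; omega) with rfl | rfl
      · obtain ⟨n, rfl⟩ : ∃ n', n = n' + 1 := ⟨n - 1, by
          have : Nat.fib (0 + 2) - 1 = 0 := rfl
          rcases n with _ | n <;> omega⟩
        have hrest : potential (n + 3) (s (j + 1)) q ≤ Nat.fib (n + 3) - 1 - (j + 1) := by
          simpa using (hs.shift (j + 1)).potential_le (r := q) (by
            rw [Nat.add_sub_cancel' (by omega)]; exact hend)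
        have hafter : Nat.fib (n + 3) - 1 ≤ potential (n + 3) (s (j + 1)) q :=
          hk.fib_sub_one_le_potential hlast hnext
        have : Nat.fib (n + 1 + 2) = Nat.fib (n + 3) := rfl
        omega
      · obtain ⟨-, -, X, -, -, -, -, -, hX, hnX, -⟩ := hk
        exact hnX (castSucc (last n)) (by simp) (by rw [hnext, ← hlast]; exact hX _ (by simp))
    · constructor
      · rw [hk.apply_eq _ (by simp; omega) (by simp; omega), hlast]
      · rw [hk.apply_eq _ (by simp; omega) (by simp; omega), hnext]

theorem IsTransfer.decompose (hpq : p ≠ q)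
    (hs : IsTransfer (n + 2) p q (Nat.fib (n + 4) - 1) s) :
    (∀ i ≤ Nat.fib (n + 3) - 1, s i (last (n + 1)) = p) ∧
    IsTransfer (n + 1) p (third p q) (Nat.fib (n + 3) - 1) (fun i => init (s i)) ∧
    (∀ j ≤ Nat.fib (n + 2) - 1, s (Nat.fib (n + 3) + j) (last (n + 1)) = q ∧
      s (Nat.fib (n + 3) + j) (castSucc (last n)) = q) ∧
    IsTransfer n (third p q) q (Nat.fib (n + 2) - 1)
      (fun j => init (init (s (Nat.fib (n + 3) + j)))) := by
  obtain ⟨t, htm, Y, Z, hpY, hYZ, hbefore, hst, hst1⟩ := hs.exists_top_move hpq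
  have hprefix : IsTransfer (n + 1) p Y t (fun i => init (s i)) :=
    ⟨by rw [hs.start]; rfl, by rw [hst, Fin.init_snoc], (hs.walk.mono htm.le).init hbefore⟩
  have ht : Nat.fib (n + 3) - 1 ≤ t := by
    simpa [hprefix.start, potential_const, hpY] using
      hprefix.walk.potential_le hprefix.finish
  have hrest : potential (n + 2) (s (t + 1)) q ≤ Nat.fib (n + 4) - 1 - (t + 1) := by
    simpa using (hs.walk.shift (t + 1)).potential_le (r := q)
      (by rw [Nat.add_sub_cancel' (by omega)]; exact hs.finish)
  have f4 : Nat.fib (n + 4) = Nat.fib (n + 2) + Nat.fib (n + 3) := Nat.fib_add_two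
  have f23 : Nat.fib (n + 2) < Nat.fib (n + 3) := Nat.fib_lt_fib_succ (by omega)
  have f2 : 0 < Nat.fib (n + 2) := Nat.fib_pos.2 (by omega)
  obtain rfl : q = Z := by
    by_contra hZq
    have := potential_snoc_snoc_of_ne (m := n) (Y := Y) (Ne.symm hZq)
    rw [← hst1] at this
    omega
  obtain rfl : Y = third p q := eq_third hpq hpY.symm hYZ
  obtain rfl : t = Nat.fib (n + 3) - 1 := by
    rw [hst1, potential_snoc_snoc_self hYZ] at hrest
    omega
  rw [Nat.sub_add_cancel (by omega)] at hst1
  have hsuffix : IsWalk (n + 2) (Nat.fib (n + 2) - 1) (fun j => s (Nat.fib (n + 3) + j)) :=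
    (hs.walk.shift _).mono (by omega)
  have hend : s (Nat.fib (n + 3) + (Nat.fib (n + 2) - 1)) = fun _ => q := by
    rw [← hs.finish]; congr 1; omega
  have hstay := hsuffix.two_largest_stay (by simpa using hst1) hend
  refine ⟨hbefore, hprefix, hstay, ⟨by simp [hst1, Fin.init_snoc], by rw [hend]; rfl, ?_⟩⟩
  exact (hsuffix.init fun j hj => (hstay j hj).1).init fun j hj => (hstay j hj).2

end Decomposition

lemma eq_of_init_eq {α : Type*} {n : ℕ} {a b : Fin (n + 1) → α} (h : init a = init b)
    (hlast : a (last n) = b (last n)) : a = b := by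
  rw [← Fin.snoc_init_self a, ← Fin.snoc_init_self b, h, hlast]

theorem IsTransfer.unique {n : ℕ} {p q : Fin 3} (hpq : p ≠ q) {s s' : ℕ → Fin n → Fin 3}
    (hs : IsTransfer n p q (Nat.fib (n + 2) - 1) s)
    (hs' : IsTransfer n p q (Nat.fib (n + 2) - 1) s') :
    ∀ i ≤ Nat.fib (n + 2) - 1, s i = s' i := by
  induction n using Nat.twoStepInduction generalizing p q with
  | zero =>
    intro i hi
    obtain rfl : i = 0 := by simpa using hi
    rw [hs.start, hs'.start]
  | one =>
    intro i hi
    rcases (show i = 0 ∨ i = 1 by have : Nat.fib (1 + 2) = 2 := rfl; omega) with rfl | rfl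
    · rw [hs.start, hs'.start]
    · exact hs.finish.trans hs'.finish.symm
  | more n ih₀ ih₁ =>
    obtain ⟨hpre, hprefix, hstay, hsuffix⟩ := hs.decompose hpq
    obtain ⟨hpre', hprefix', hstay', hsuffix'⟩ := hs'.decompose hpq
    have f4 : Nat.fib (n + 2 + 2) = Nat.fib (n + 2) + Nat.fib (n + 3) := Nat.fib_add_two
    have f3 : Nat.fib (n + 1 + 2) = Nat.fib (n + 3) := rfl
    have f2 : 0 < Nat.fib (n + 2) := Nat.fib_pos.2 (by omega)
    intro i hi
    rcases Nat.lt_or_ge i (Nat.fib (n + 3)) with hi' | hi'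
    · refine eq_of_init_eq ?_ (by rw [hpre i (by omega), hpre' i (by omega)])
      exact ih₁ (third_ne_left hpq).symm hprefix hprefix' i (by omega)
    · obtain ⟨j, rfl⟩ := Nat.exists_eq_add_of_le hi'
      have hj : j ≤ Nat.fib (n + 2) - 1 := by omega
      refine eq_of_init_eq (eq_of_init_eq ?_ ?_) ?_
      · exact ih₀ (third_ne_right hpq) hsuffix hsuffix' j hj
      · exact (hstay j hj).2.trans (hstay' j hj).2.symm
      · exact (hstay j hj).1.trans (hstay' j hj).1.symm

def moveLetter (n : ℕ) (a b : Fin n → Fin 3) : Option Bool :=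
  if FibMove n 1 a b then
    some (if h : 0 < n then decide (b ⟨0, h⟩ = a ⟨0, h⟩ + 1) else true)
  else none

def wordOf (n m : ℕ) (s : ℕ → Fin n → Fin 3) : List Bool :=
  (List.range m).filterMap fun i => moveLetter n (s i) (s (i + 1))

section Words

variable {n m : ℕ}

lemma _root_.muWord_eq_wordOf (s : ℕ → Fin n → Fin 3) :
    muWord n s = wordOf n (Nat.fib (n + 2) - 1) s := by
  rw [muWord, wordOf, ← List.filterMap_eq_filter, List.map_filterMap]
  congr 1
  funext i
  by_cases h : FibMove n 1 (s i) (s (i + 1)) <;> simp [moveLetter, h]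

lemma wordOf_add (a b : ℕ) (s : ℕ → Fin n → Fin 3) :
    wordOf n (a + b) s = wordOf n a s ++ wordOf n b (fun i => s (a + i)) := by
  simp [wordOf, List.range_add, add_assoc]

lemma wordOf_one (s : ℕ → Fin n → Fin 3) :
    wordOf n 1 s = (moveLetter n (s 0) (s 1)).toList := by
  cases h : moveLetter n (s 0) (s 1) <;> simp [wordOf, h]

lemma wordOf_congr {s s' : ℕ → Fin n → Fin 3} (h : ∀ i ≤ m, s i = s' i) :
    wordOf n m s = wordOf n m s' :=
  List.filterMap_congr fun i hi => by
    rw [List.mem_range] at hi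
    rw [h i hi.le, h (i + 1) hi]

lemma moveLetter_eq_init {a b : Fin (n + 1) → Fin 3} (h : b (last n) = a (last n)) :
    moveLetter (n + 1) a b = moveLetter n (init a) (init b) := by
  cases n with
  | zero =>
    have h₁ : ¬ FibMove 1 1 a b :=
      fun hab => absurd (hab.le_iff_apply_last_eq.2 h) (by omega)
    have h₀ : ¬ FibMove 0 1 (init a) (init b) := fun hab => absurd hab.2.1 (by omega)
    simp [moveLetter, h₁, h₀]
  | succ n =>
    simp only [moveLetter, fibMove_succ_iff (Nat.succ_pos n), h, and_true]
    rfl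

lemma moveLetter_eq_none {a b : Fin (n + 2) → Fin 3}
    (h : b (last (n + 1)) ≠ a (last (n + 1))) : moveLetter (n + 2) a b = none :=
  if_neg fun hab => h (hab.le_iff_apply_last_eq.1 (by omega))

lemma moveLetter_reflect (c : Fin 3) (a b : Fin n → Fin 3) :
    moveLetter n (fun j => c - a j) (fun j => c - b j) = (moveLetter n a b).map (!·) := by
  have hiff : FibMove n 1 (fun j => c - a j) (fun j => c - b j) ↔ FibMove n 1 a b := by
    refine ⟨fun h => ?_, FibMove.comp _ sub_right_injective⟩
    simpa [Function.comp_def] using FibMove.comp _ (sub_right_injective (b := c)) h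
  have hletter :
      ∀ c x y : Fin 3, y ≠ x → decide (c - y = c - x + 1) = !decide (y = x + 1) := by
    decide
  by_cases hab : FibMove n 1 a b
  · have hn : 0 < n := hab.2.1
    simp only [moveLetter, hiff, hab, if_true, dif_pos hn, Option.map_some]
    exact congrArg some (hletter c _ _ ((fibMove_one_iff hn).1 hab).1)
  · simp [moveLetter, hiff, hab]

lemma wordOf_eq_init {s : ℕ → Fin (n + 1) → Fin 3} {c : Fin 3}
    (hc : ∀ i ≤ m, s i (last n) = c) : wordOf (n + 1) m s = wordOf n m (fun i => init (s i)) :=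
  List.filterMap_congr fun i hi => by
    rw [List.mem_range] at hi
    exact moveLetter_eq_init (by rw [hc i hi.le, hc (i + 1) hi])

lemma wordOf_reflect (c : Fin 3) (s : ℕ → Fin n → Fin 3) :
    wordOf n m (fun i j => c - s i j) = (wordOf n m s).map (!·) := by
  simp only [wordOf, List.map_filterMap, moveLetter_reflect]

end Words

lemma _root_.muWord_one {s : ℕ → Fin 1 → Fin 3} (hs : IsTransfer 1 0 2 1 s) :
    muWord 1 s = [false] := by
  rw [muWord_eq_wordOf, show Nat.fib (1 + 2) - 1 = 1 from rfl, wordOf_one, hs.start, hs.finish]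
  decide

theorem _root_.muWord_add_two {n : ℕ} {s : ℕ → Fin (n + 2) → Fin 3}
    {s₁ : ℕ → Fin (n + 1) → Fin 3} {s₀ : ℕ → Fin n → Fin 3}
    (hs : IsTransfer (n + 2) 0 2 (Nat.fib (n + 4) - 1) s)
    (hs₁ : IsTransfer (n + 1) 0 2 (Nat.fib (n + 3) - 1) s₁)
    (hs₀ : IsTransfer n 0 2 (Nat.fib (n + 2) - 1) s₀) :
    muWord (n + 2) s = (muWord (n + 1) s₁ ++ muWord n s₀).map (!·) := by
  obtain ⟨hbefore, hprefix, hstay, hsuffix⟩ := hs.decompose (by decide)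
  have hprefix_word :
      wordOf (n + 2) (Nat.fib (n + 3) - 1) s = (muWord (n + 1) s₁).map (!·) := by
    rw [wordOf_eq_init hbefore, wordOf_congr (hprefix.unique (by decide) (hs₁.reflect 0)),
      wordOf_reflect, muWord_eq_wordOf]
  have hsuffix_word : wordOf (n + 2) (Nat.fib (n + 2) - 1) (fun j => s (Nat.fib (n + 3) + j)) =
      (muWord n s₀).map (!·) := by
    rw [wordOf_eq_init fun j hj => (hstay j hj).1, wordOf_eq_init fun j hj => (hstay j hj).2,
      wordOf_congr (hsuffix.unique (by decide) (hs₀.reflect 1)), wordOf_reflect,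
      muWord_eq_wordOf]
  obtain ⟨T, hT⟩ : ∃ T, Nat.fib (n + 3) = T + 1 :=
    Nat.exists_eq_succ_of_ne_zero (Nat.fib_pos.2 (by omega)).ne'
  have hlen : Nat.fib (n + 2 + 2) - 1 = T + 1 + (Nat.fib (n + 2) - 1) := by
    have : Nat.fib (n + 4) = Nat.fib (n + 2) + Nat.fib (n + 3) := Nat.fib_add_two
    have := Nat.fib_pos.2 (show 0 < n + 2 by omega)
    simp only [show n + 2 + 2 = n + 4 from rfl]
    omega
  have hmiddle : moveLetter (n + 2) (s T) (s (T + 1)) = none := by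
    refine moveLetter_eq_none ?_
    rw [hbefore T (by omega), ← add_zero (T + 1), ← hT, (hstay 0 (by omega)).1]
    decide
  rw [hT, Nat.add_sub_cancel] at hprefix_word
  rw [hT] at hsuffix_word
  rw [muWord_eq_wordOf, hlen, wordOf_add, wordOf_add, wordOf_one, add_zero, hmiddle,
    hprefix_word, hsuffix_word, Option.toList_none, List.append_nil, List.map_append]

end HanoiFib

/-- `μ_0` is the empty word, `μ_1 = l`, for every `n ≥ 2` one has
`μ_n = (μ_{n-1} μ_{n-2})^*` (where `*` exchanges the letters `l = false` and
`r = true`), and for every `n ≥ 4`, `μ_n = μ_{n-2} μ_{n-3} μ_{n-3} μ_{n-4}`. -/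
theorem hanoiFibonacci_mu_recurrences
    (sol : (n : ℕ) → ℕ → (Fin n → Fin 3))
    (hsol : ∀ n, IsSolution n (Nat.fib (n + 2) - 1) (sol n))
    (μ : ℕ → List Bool) (hμ : ∀ n, μ n = muWord n (sol n)) :
    μ 0 = [] ∧ μ 1 = [false] ∧
    (∀ n, 2 ≤ n → μ n = (μ (n - 1) ++ μ (n - 2)).map (fun b => !b)) ∧
    (∀ n, 4 ≤ n → μ n = μ (n - 2) ++ μ (n - 3) ++ μ (n - 3) ++ μ (n - 4)) := by
  have hrec : ∀ n, μ (n + 2) = (μ (n + 1) ++ μ n).map (!·) := fun n => by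
    simp only [hμ]
    exact muWord_add_two (hsol _).isTransfer (hsol _).isTransfer (hsol _).isTransfer
  refine ⟨by rw [hμ]; rfl, by rw [hμ]; exact muWord_one (hsol 1).isTransfer,
    fun n hn => ?_, fun n hn => ?_⟩
  · obtain ⟨n, rfl⟩ := Nat.exists_eq_add_of_le' hn
    exact hrec n
  · obtain ⟨n, rfl⟩ := Nat.exists_eq_add_of_le' hn
    rw [show n + 4 - 2 = n + 2 by omega, show n + 4 - 3 = n + 1 by omega, Nat.add_sub_cancel,
      hrec (n + 2), hrec (n + 1), hrec n]
    simp [List.map_map, Function.comp_def]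
end

section
/- For every n ≥ 1, the Hamming distance h(g_n, g_{n+1}) equals 2 if n + 1 = F_k for some k ≥ 3, and equals 1 otherwise. -/
/-- A ZF-word: a binary word (leftmost digit at the head of the list) with no two
consecutive digits `1`. -/
def ZFword (w : List Bool) : Prop :=
  w.Chain' fun a b => ¬(a = true ∧ b = true)

/-- The lists `N_n` of binary words: `N_0 = ()`, `N_1 = (1)` and, for `n ≥ 2`,
`N_n = 10·rev(N_{n-1}') ++ 10·rev(N_{n-2})`, where `L'` removes the leftmost letter
of each word of `L`, `rev` reverses the order of the list and `10·L` prefixes `10`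
to each word of `L`. -/
def Nlist : ℕ → List (List Bool)
  | 0 => []
  | 1 => [[true]]
  | (n + 2) =>
      ((Nlist (n + 1)).map List.tail).reverse.map (fun w => true :: false :: w) ++
        (Nlist n).reverse.map (fun w => true :: false :: w)

/-- The `i`-th term `g_i` (for `i ≥ 1`) of the infinite list
`G = N_1 ++ N_2 ++ N_3 ++ ⋯`; the block `N_n` occupies the (1-indexed) positions
`F (n+1), …, F (n+2) - 1` of `G`. -/
def Gword (i : ℕ) : List Bool :=
  (((List.range (i + 2)).map Nlist).flatten).getD (i - 1) []

/-- The Hamming distance of two binary words (leftmost digit at the head), the shorter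
word being padded with leading `0`s: the number of positions (counted from the right)
at which the two words differ. -/
def hammingWords (w w' : List Bool) : ℕ :=
  ((Finset.range (max w.length w'.length)).filter
    (fun i => w.reverse.getD i false ≠ w'.reverse.getD i false)).card

/-!
Every word of `N n` has length `n` and starts with `1`, and the first word of `N (n+1)` is `10v`
when the last word of `N n` is `1v`. Consecutive words of a block differ in one digit: the
recursion prefixes `10` to reversed blocks that already have this property, and at the seam of
`N (n+2)` the neighbours are `100v` and `101v`. Between blocks, at position `F (m+2) - 1` of `G`,
the neighbours are `1v` and `10v`, that is `01v` and `10v` after padding: distance 2.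
-/
open Finset

lemma getD_reverse_cons {α : Type*} (a d : α) (w : List α) (i : ℕ) :
    (a :: w).reverse.getD i d = if i = w.length then a else w.reverse.getD i d := by
  rw [List.reverse_cons]
  rcases lt_trichotomy i w.length with h | rfl | h
  · rw [List.getD_append _ _ _ _ (by simpa using h), if_neg h.ne]
  · simp
  · rw [if_neg h.ne', List.getD_eq_default _ _ (by simp; omega),
      List.getD_eq_default _ _ (by simpa using h.le)]

lemma hammingWords_eq_card {w w' : List Bool} {N : ℕ} (h : w.length ≤ N) (h' : w'.length ≤ N) :
    hammingWords w w' = #{i ∈ range N | w.reverse.getD i false ≠ w'.reverse.getD i false} := by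
  rw [hammingWords, card_filter, card_filter]
  refine sum_subset (range_subset_range.2 (max_le h h')) fun i _ hi => ?_
  have hi : max w.length w'.length ≤ i := by simpa using hi
  rw [List.getD_eq_default _ _ (by simp; omega), List.getD_eq_default _ _ (by simp; omega)]
  simp

lemma hammingWords_comm (w w' : List Bool) : hammingWords w w' = hammingWords w' w := by
  simp only [hammingWords, max_comm, ne_comm]

lemma hammingWords_self (w : List Bool) : hammingWords w w = 0 := by
  simp [hammingWords]

lemma hammingWords_false_cons (w w' : List Bool) :
    hammingWords (false :: w) w' = hammingWords w w' := by
  rw [hammingWords_eq_card (N := max (w.length + 1) w'.length) (by simp) (by simp),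
    hammingWords_eq_card (N := max (w.length + 1) w'.length) (by simp) (by simp)]
  congr 1
  refine filter_congr fun i _ => ?_
  rw [getD_reverse_cons]
  split_ifs with h
  · rw [List.getD_eq_default w.reverse _ (by simp [h])]
  · rfl

lemma hammingWords_cons_cons (a b : Bool) {w w' : List Bool} (h : w.length = w'.length) :
    hammingWords (a :: w) (b :: w') = hammingWords w w' + if a = b then 0 else 1 := by
  rw [hammingWords_eq_card (N := w.length + 1) (by simp) (by simp [h]),
    hammingWords_eq_card le_rfl h.ge, card_filter, card_filter, sum_range_succ]
  congr 1
  · refine sum_congr rfl fun i hi => ?_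
    have hi : i ≠ w.length := (mem_range.1 hi).ne
    simp only [getD_reverse_cons, ← h, if_neg hi]
  · simp [h]

lemma hammingWords_cons_cons_self (a : Bool) {w w' : List Bool} (h : w.length = w'.length) :
    hammingWords (a :: w) (a :: w') = hammingWords w w' := by
  simp [hammingWords_cons_cons a a h]

lemma hammingWords_false_cons_true_cons (w : List Bool) :
    hammingWords (false :: w) (true :: w) = 1 := by
  simp [hammingWords_cons_cons false true rfl, hammingWords_self]

lemma hammingWords_true_cons_true_false_cons (w : List Bool) :
    hammingWords (true :: w) (true :: false :: w) = 2 := by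
  rw [← hammingWords_false_cons, hammingWords_cons_cons false true (by simp),
    hammingWords_comm, hammingWords_false_cons_true_cons]
  rfl

lemma length_Nlist : ∀ n, (Nlist n).length = Nat.fib n
  | 0 | 1 => rfl
  | n + 2 => by simp [Nlist, length_Nlist (n + 1), length_Nlist n, Nat.fib_add_two, add_comm]

lemma Nlist_ne_nil {n : ℕ} (hn : n ≠ 0) : Nlist n ≠ [] := by
  rw [← List.length_pos_iff, length_Nlist]
  exact Nat.fib_pos.2 (Nat.pos_of_ne_zero hn)

lemma length_of_mem_Nlist : ∀ {n : ℕ} {w : List Bool}, w ∈ Nlist n → w.length = n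
  | 1, _, hw => by simp_all [Nlist]
  | n + 2, _, hw => by
    simp only [Nlist, List.mem_append, List.mem_map, List.mem_reverse] at hw
    rcases hw with ⟨_, ⟨u, hu, rfl⟩, rfl⟩ | ⟨v, hv, rfl⟩
    · simp [length_of_mem_Nlist hu]
    · simp [length_of_mem_Nlist hv]

lemma exists_eq_true_cons_of_mem_Nlist : ∀ {n : ℕ} {w : List Bool}, w ∈ Nlist n →
    ∃ v, w = true :: v
  | 1, _, hw => by simp_all [Nlist]
  | n + 2, _, hw => by
    simp only [Nlist, List.mem_append, List.mem_map, List.mem_reverse] at hw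
    rcases hw with ⟨v, -, rfl⟩ | ⟨v, -, rfl⟩ <;> exact ⟨_, rfl⟩

lemma head?_Nlist_succ {n : ℕ} (hn : n ≠ 0) :
    (Nlist (n + 1)).head? = (Nlist n).getLast?.map fun w => true :: false :: w.tail := by
  obtain ⟨n, rfl⟩ := Nat.exists_eq_succ_of_ne_zero hn
  obtain ⟨w, hw⟩ := Option.isSome_iff_exists.1 (List.getLast?_isSome.2 (Nlist_ne_nil hn))
  simp [Nlist, List.head?_append, hw]

lemma isChain_Nlist : ∀ n, (Nlist n).IsChain fun w w' => hammingWords w w' = 1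
  | 0 | 1 => by simp [Nlist]
  | n + 2 => by
    have tail_step : ∀ w w', w ∈ Nlist (n + 1) → w' ∈ Nlist (n + 1) → hammingWords w w' = 1 →
        hammingWords (true :: false :: w'.tail) (true :: false :: w.tail) = 1 := by
      intro w w' hw hw' h
      obtain ⟨v, rfl⟩ := exists_eq_true_cons_of_mem_Nlist hw
      obtain ⟨v', rfl⟩ := exists_eq_true_cons_of_mem_Nlist hw'
      have hl : v'.length = v.length := by
        simpa using (length_of_mem_Nlist hw').trans (length_of_mem_Nlist hw).symm
      rwa [List.tail_cons, List.tail_cons, hammingWords_cons_cons_self _ (by simpa),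
        hammingWords_cons_cons_self _ hl, hammingWords_comm,
        ← hammingWords_cons_cons_self true hl.symm]
    have step : ∀ w w', w ∈ Nlist n → w' ∈ Nlist n → hammingWords w w' = 1 →
        hammingWords (true :: false :: w') (true :: false :: w) = 1 := by
      intro w w' hw hw' h
      have hl : w'.length = w.length :=
        (length_of_mem_Nlist hw').trans (length_of_mem_Nlist hw).symm
      rwa [hammingWords_cons_cons_self _ (by simpa), hammingWords_cons_cons_self _ hl,
        hammingWords_comm]
    rw [Nlist, List.isChain_append]
    refine ⟨?_, ?_, ?_⟩
    · simpa only [List.isChain_map, List.isChain_reverse] using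
        (isChain_Nlist (n + 1)).imp_of_mem_imp tail_step
    · simpa only [List.isChain_map, List.isChain_reverse] using
        (isChain_Nlist n).imp_of_mem_imp step
    · rcases Nat.eq_zero_or_pos n with rfl | hn
      · simp [Nlist]
      simp only [List.getLast?_map, List.getLast?_reverse, List.head?_map, List.head?_reverse,
        head?_Nlist_succ hn.ne', Option.map_map, Option.mem_def, Option.map_eq_some_iff]
      rintro _ ⟨w, hw, rfl⟩ _ ⟨w', hw', rfl⟩
      obtain ⟨v, rfl⟩ := exists_eq_true_cons_of_mem_Nlist (List.mem_of_getLast? hw)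
      cases hw.symm.trans hw'
      simp [hammingWords_cons_cons_self, hammingWords_false_cons_true_cons]

lemma length_flatten_map_Nlist_range : ∀ M,
    ((List.range M).map Nlist).flatten.length = Nat.fib (M + 1) - 1
  | 0 => rfl
  | M + 1 => by
    have : 0 < Nat.fib (M + 1) := Nat.fib_pos.2 (by omega)
    rw [List.range_succ, List.map_append, List.flatten_append, List.length_append,
      length_flatten_map_Nlist_range M, List.map_singleton, List.flatten_singleton, length_Nlist,
      Nat.fib_add_two]
    omega

lemma Gword_eq_getD_Nlist {m i : ℕ} (h1 : Nat.fib (m + 1) ≤ i) (h2 : i < Nat.fib (m + 2)) :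
    Gword i = (Nlist m).getD (i - Nat.fib (m + 1)) [] := by
  obtain ⟨k, hk⟩ : ∃ k, i + 2 = m + 1 + k :=
    ⟨i + 1 - m, by have := Nat.le_fib_add_one (m + 1); omega⟩
  have hlen := length_flatten_map_Nlist_range m
  have hfib := Nat.fib_add_two (n := m)
  rw [Gword, hk, List.range_add, List.map_append, List.flatten_append, List.range_succ,
    List.map_append, List.flatten_append, List.map_singleton, List.flatten_singleton,
    List.getD_append _ _ _ _ (by simp only [List.length_append, hlen, length_Nlist]; omega),
    List.getD_append_right _ _ _ _ (by rw [hlen]; omega), hlen]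
  have : 0 < Nat.fib (m + 1) := Nat.fib_pos.2 m.succ_pos
  congr 1
  omega

lemma hammingWords_Gword_succ_of_succ_lt {m n : ℕ} (h1 : Nat.fib (m + 1) ≤ n)
    (h2 : n + 1 < Nat.fib (m + 2)) : hammingWords (Gword n) (Gword (n + 1)) = 1 := by
  have hlen : n - Nat.fib (m + 1) + 1 < (Nlist m).length := by
    have := Nat.fib_add_two (n := m)
    rw [length_Nlist]
    omega
  rw [Gword_eq_getD_Nlist h1 (by omega), Gword_eq_getD_Nlist (by omega) h2,
    show n + 1 - Nat.fib (m + 1) = n - Nat.fib (m + 1) + 1 by omega,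
    List.getD_eq_getElem _ _ hlen, List.getD_eq_getElem _ _ (by omega)]
  exact (isChain_Nlist m).getElem _ hlen

lemma hammingWords_Gword_succ_of_succ_eq {m n : ℕ} (hm : m ≠ 0) (h : n + 1 = Nat.fib (m + 2)) :
    hammingWords (Gword n) (Gword (n + 1)) = 2 := by
  have hfib : Nat.fib (m + 2) = Nat.fib m + Nat.fib (m + 1) := Nat.fib_add_two
  have hfib_succ : Nat.fib (m + 1 + 1) = Nat.fib (m + 2) := rfl
  have hfib' : Nat.fib (m + 1 + 2) = Nat.fib (m + 1) + Nat.fib (m + 2) := Nat.fib_add_two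
  have hpos : 0 < Nat.fib m := Nat.fib_pos.2 (Nat.pos_of_ne_zero hm)
  have hpos' : 0 < Nat.fib (m + 1) := Nat.fib_pos.2 (by omega)
  obtain ⟨w, hw⟩ := Option.isSome_iff_exists.1 (List.getLast?_isSome.2 (Nlist_ne_nil hm))
  obtain ⟨v, rfl⟩ := exists_eq_true_cons_of_mem_Nlist (List.mem_of_getLast? hw)
  rw [Gword_eq_getD_Nlist (m := m) (by omega) (by omega),
    Gword_eq_getD_Nlist (m := m + 1) (by omega) (by omega),
    show n - Nat.fib (m + 1) = (Nlist m).length - 1 by rw [length_Nlist]; omega,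
    show n + 1 - Nat.fib (m + 1 + 1) = 0 by omega, List.getD_eq_getElem?_getD,
    List.getD_eq_getElem?_getD, ← List.getLast?_eq_getElem?, ← List.head?_eq_getElem?,
    head?_Nlist_succ hm, hw]
  exact hammingWords_true_cons_true_false_cons v

/-- For every `n ≥ 1`, the Hamming distance `h(g_n, g_{n+1})` equals
`2` if `n + 1 = F k` for some `k ≥ 3`, and equals `1` otherwise. -/
theorem grayCode_hamming_distance (n : ℕ) (hn : 1 ≤ n) :
    ((∃ k, 3 ≤ k ∧ n + 1 = Nat.fib k) → hammingWords (Gword n) (Gword (n + 1)) = 2) ∧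
    ((¬∃ k, 3 ≤ k ∧ n + 1 = Nat.fib k) → hammingWords (Gword n) (Gword (n + 1)) = 1) := by
  set m := n.greatestFib - 1
  have hm : 2 ≤ n.greatestFib := Nat.le_greatestFib.2 hn
  have h1 : Nat.fib (m + 1) ≤ n := by
    rw [show m + 1 = n.greatestFib by omega]; exact Nat.fib_greatestFib_le n
  have h2 : n < Nat.fib (m + 2) := by
    rw [show m + 2 = n.greatestFib + 1 by omega]; exact Nat.lt_fib_greatestFib_add_one n
  rcases (Nat.succ_le_of_lt h2).lt_or_eq with hlt | heq
  · have not_fib : ¬∃ k, 3 ≤ k ∧ n + 1 = Nat.fib k := by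
      rintro ⟨k, -, hk⟩
      rcases le_or_gt k (m + 1) with hk' | hk'
      · have := Nat.fib_mono hk'; omega
      · have := Nat.fib_mono (show m + 2 ≤ k by omega); omega
    exact ⟨fun h => absurd h not_fib, fun _ => hammingWords_Gword_succ_of_succ_lt h1 hlt⟩
  · exact ⟨fun _ => hammingWords_Gword_succ_of_succ_eq (by omega) heq,
      fun h => absurd ⟨m + 2, by omega, heq⟩ h⟩
end
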